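/- (Proposition 2.) The poset (ℰ^N, ⊑) is a geometric lattice (i.e., a finite atomistic semimodular lattice) in which the meet of any two embedded subsets (A,P),(B,Q) ∈ ℰ^N is their componentwise meet (A ∩ B, P ∧ Q) and their join is cl((A ∪ B, P ∨ Q)), the closure of their componentwise join. -/

import Mathlib

open scoped BigOperators

/-- `modp n A` is the modular partition `P^A_⊥` of `Fin n` whose unique (possibly)
non-singleton block is `A`, all other blocks being singletons. -/
def modp (n : ℕ) (A : Set (Fin n)) : Setoid (Fin n) where
  r x y := x = y ∨ (x ∈ A ∧ y ∈ A)
  iseqv := by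
    refine ⟨fun _ => Or.inl rfl, ?_, ?_⟩
    · rintro x y (rfl | ⟨hx, hy⟩)
      · exact Or.inl rfl
      · exact Or.inr ⟨hy, hx⟩
    · rintro x y z (rfl | ⟨hx, hy⟩) h
      · exact h
      · rcases h with rfl | ⟨hy', hz⟩
        · exact Or.inr ⟨hx, hy⟩
        · exact Or.inr ⟨hx, hz⟩

/-- The product `X^N = 2^N × 𝒫^N` of the subset lattice and the partition lattice,
ordered componentwise. -/
abbrev XN (n : ℕ) := Set (Fin n) × Setoid (Fin n)

/-- The closure operator `cl` on `X^N`:  `cl(∅,P) = (∅,P)` and, for `A ≠ ∅`,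
`cl(A,P) = (Ā, P ⊔ P^A_⊥)` where `Ā` is the block of `P ⊔ P^A_⊥` containing `A`. -/
def EmbClosure (n : ℕ) (x : XN n) : XN n :=
  ({y | ∃ a ∈ x.1, (x.2 ⊔ modp n x.1) y a}, x.2 ⊔ modp n x.1)

/-- An embedded subset is a pair that coincides with its closure. -/
def IsEmbedded (n : ℕ) (x : XN n) : Prop := EmbClosure n x = x

/-- The lattice `ℰ^N` of embedded subsets, with the induced order. -/
abbrev Emb (n : ℕ) := {x : XN n // IsEmbedded n x}

lemma modp_le_of_subsingleton {n : ℕ} {A : Set (Fin n)} (h : A.Subsingleton)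
    (Q : Setoid (Fin n)) : modp n A ≤ Q := by
  rw [Setoid.le_def]
  intro x y hxy
  rcases hxy with rfl | ⟨hx, hy⟩
  · exact Q.refl' x
  · obtain rfl := h hx hy
    exact Q.refl' x

lemma modp_eq_bot_of_subsingleton {n : ℕ} {A : Set (Fin n)} (h : A.Subsingleton) :
    modp n A = ⊥ :=
  le_antisymm (modp_le_of_subsingleton h ⊥) bot_le

lemma embedded_empty (n : ℕ) (Q : Setoid (Fin n)) : IsEmbedded n (∅, Q) := by
  unfold IsEmbedded EmbClosure
  refine Prod.ext ?_ ?_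
  · simp
  · simpa using sup_eq_left.mpr (modp_le_of_subsingleton Set.subsingleton_empty Q)

lemma embedded_univ_top (n : ℕ) : IsEmbedded n (Set.univ, ⊤) := by
  unfold IsEmbedded EmbClosure
  refine Prod.ext ?_ ?_
  · ext y
    simp only [Set.mem_setOf_eq, Set.mem_univ, iff_true]
    exact ⟨y, trivial, Setoid.refl' _ y⟩
  · exact sup_eq_left.mpr le_top

lemma embedded_singleton (n : ℕ) (i : Fin n) : IsEmbedded n ({i}, ⊥) := by
  have hb : modp n ({i} : Set (Fin n)) = ⊥ :=
    modp_eq_bot_of_subsingleton Set.subsingleton_singleton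
  unfold IsEmbedded EmbClosure
  refine Prod.ext ?_ ?_
  · ext y
    simp only [Set.mem_setOf_eq, hb, sup_idem, Set.mem_singleton_iff]
    constructor
    · rintro ⟨a, ha, hrel⟩
      subst ha
      first
        | have h' : ((⊥ : Setoid (Fin n)) ⊔ modp n {a}) y a := hrel
          rw [hb, sup_idem] at h'
          first
            | simpa [Setoid.bot_def] using h'
            | exact h'
            | simpa using h'
        | have h' : ((⊥ : Setoid (Fin n)) ⊔ modp n {i}) y i := hrel
          rw [hb, sup_idem] at h'
          first
            | simpa [Setoid.bot_def] using h'
            | exact h'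
            | simpa using h'
    · rintro rfl
      exact ⟨y, rfl, Setoid.refl' _ y⟩
  · simp [hb]

/-- The bottom element `(∅, P_⊥)` of `ℰ^N`. -/
def botE (n : ℕ) : Emb n := ⟨(∅, ⊥), embedded_empty n ⊥⟩

/-- The top element `(N, P^⊤)` of `ℰ^N`. -/
def topE (n : ℕ) : Emb n := ⟨(Set.univ, ⊤), embedded_univ_top n⟩

/-- The atom `({i}, P_⊥)` of `ℰ^N`. -/
def atomS (n : ℕ) (i : Fin n) : Emb n := ⟨({i}, ⊥), embedded_singleton n i⟩

/-- The atom `(∅, [ij])` of `ℰ^N`, where `[ij]` is the atom of the partition lattice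
whose unique non-singleton block is the pair `{i, j}`. -/
def atomP (n : ℕ) (i j : Fin n) : Emb n := ⟨(∅, modp n {i, j}), embedded_empty n _⟩

/-- A pair is an atom candidate: of the form `({i},P_⊥)` or `(∅,[ij])` with `i ≠ j`. -/
def IsAtomPair (n : ℕ) (a : XN n) : Prop :=
  (∃ i : Fin n, a = ({i}, ⊥)) ∨ ∃ i j : Fin n, i ≠ j ∧ a = (∅, modp n {i, j})

/-- The number of blocks `|P|` of a partition. -/
noncomputable def numBlocks {α : Type*} (P : Setoid α) : ℕ := P.classes.ncard

/-- The rank function `r(A,P) = (n − |P|) + min{|A|,1}` of `ℰ^N`. -/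
noncomputable def erank (n : ℕ) (x : XN n) : ℕ := (n - numBlocks x.2) + min x.1.ncard 1

/-- The partition `Q^S` of `S` induced by a partition `Q` of `N`. -/
def indPart {n : ℕ} (S : Set (Fin n)) (Q : Setoid (Fin n)) : Setoid S :=
  Setoid.comap Subtype.val Q

/-- `mu` is the Möbius function of the (finite) poset `α`. -/
def IsMobius {α : Type*} [PartialOrder α] (mu : α → α → ℤ) : Prop :=
  (∀ x, mu x x = 1) ∧
  (∀ x y, ¬x ≤ y → mu x y = 0) ∧
  (∀ x y, x < y → mu x y = -∑ᶠ z ∈ Set.Ico x y, mu x z)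

/-!
An embedded subset is a pair `(A, P)` with `A` empty or a block of `P`, and `cl` is a closure
operator on `X^N` whose closed elements are the embedded subsets; this gives the meets and
joins. Every pair `(A, P)` is the join of the atoms `({i}, P_⊥)`, `i ∈ A`, and
`(∅, P^{u,v}_⊥)`, `u ~_P v`, below it.

For semimodularity, if `x ⊓ y ⋖ x` then `x = cl((x ⊓ y) ⊔ e)` for an atom `e`, so
`cl(x ⊔ y) = cl(y ⊔ e)`. The partition of `cl(y ⊔ e)` is that of `y` joined with at most one
atom of the partition lattice, which covers it; and the set part of an embedded subset is
determined by its partition together with one of its points, so nothing lies strictly between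
`y` and `cl(y ⊔ e)`.
-/

instance Setoid.finite {α : Type*} [Finite α] : Finite (Setoid α) :=
  Finite.of_injective (fun s : Setoid α => (s : α → α → Prop))
    fun _ _ h => Setoid.ext fun a b => iff_of_eq (congrFun₂ h a b)

section Modp

variable {n : ℕ}

lemma modp_le_iff {A : Set (Fin n)} {Q : Setoid (Fin n)} :
    modp n A ≤ Q ↔ ∀ a ∈ A, ∀ b ∈ A, Q a b := by
  refine ⟨fun h a ha b hb => h (Or.inr ⟨ha, hb⟩), fun h x y hxy => ?_⟩
  rcases hxy with rfl | ⟨hx, hy⟩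
  · exact Q.refl' x
  · exact h x hx y hy

lemma modp_pair_le_iff {Q : Setoid (Fin n)} {u v : Fin n} : modp n {u, v} ≤ Q ↔ Q u v := by
  refine ⟨fun h => h (Or.inr ⟨.inl rfl, .inr rfl⟩), fun h => modp_le_iff.2 ?_⟩
  rintro a (rfl | rfl) b (rfl | rfl)
  exacts [Q.refl' _, h, Q.symm' h, Q.refl' _]

lemma modp_mono {A B : Set (Fin n)} (h : A ⊆ B) : modp n A ≤ modp n B :=
  modp_le_iff.2 fun _ ha _ hb => Or.inr ⟨h ha, h hb⟩

lemma sup_modp_insert {Q : Setoid (Fin n)} {A : Set (Fin n)} (hA : modp n A ≤ Q) {a : Fin n}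
    (ha : a ∈ A) (i : Fin n) : Q ⊔ modp n (insert i A) = Q ⊔ modp n {i, a} := by
  refine le_antisymm (sup_le le_sup_left (modp_le_iff.2 ?_))
    (sup_le_sup_left (modp_mono (Set.insert_subset_insert (Set.singleton_subset_iff.2 ha))) Q)
  set R := Q ⊔ modp n {i, a}
  have hrel : ∀ c ∈ insert i A, R c i := by
    rintro c (rfl | hc)
    · exact R.refl' c
    · have hia : R i a := (le_sup_right : modp n {i, a} ≤ R) (modp_pair_le_iff.1 le_rfl)
      exact R.trans' ((le_sup_left : Q ≤ R) (modp_le_iff.1 hA c hc a ha)) (R.symm' hia)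
  exact fun c hc d hd => R.trans' (hrel c hc) (R.symm' (hrel d hd))

def mergeBlocks (Q : Setoid (Fin n)) (u v : Fin n) : Setoid (Fin n) where
  r x y := Q x y ∨ ((Q x u ∨ Q x v) ∧ (Q y u ∨ Q y v))
  iseqv := by
    have hsat : ∀ {x y}, Q x y → (Q y u ∨ Q y v) → (Q x u ∨ Q x v) := fun hxy =>
      Or.imp (Q.trans' hxy) (Q.trans' hxy)
    refine ⟨fun x => .inl (Q.refl' x), ?_, ?_⟩
    · rintro x y (h | ⟨hx, hy⟩)
      exacts [.inl (Q.symm' h), .inr ⟨hy, hx⟩]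
    · rintro x y z (h | ⟨hx, hy⟩) (h' | ⟨hy', hz⟩)
      exacts [.inl (Q.trans' h h'), .inr ⟨hsat h hy', hz⟩,
        .inr ⟨hx, hsat (Q.symm' h') hy⟩, .inr ⟨hx, hz⟩]

lemma sup_modp_pair_le_mergeBlocks (Q : Setoid (Fin n)) (u v : Fin n) :
    Q ⊔ modp n {u, v} ≤ mergeBlocks Q u v :=
  sup_le (fun _ _ h => .inl h)
    (modp_pair_le_iff.2 (.inr ⟨.inl (Q.refl' u), .inr (Q.refl' v)⟩))

lemma eq_or_eq_sup_modp_pair_of_le {Q S : Setoid (Fin n)} {u v : Fin n} (hQS : Q ≤ S)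
    (hS : S ≤ Q ⊔ modp n {u, v}) : S = Q ∨ S = Q ⊔ modp n {u, v} := by
  by_cases huv : S u v
  · exact .inr (le_antisymm hS (sup_le hQS (modp_pair_le_iff.2 huv)))
  refine .inl (le_antisymm (fun x y hxy => ?_) hQS)
  rcases sup_modp_pair_le_mergeBlocks Q u v (hS hxy) with h | ⟨hx | hx, hy | hy⟩
  · exact h
  · exact Q.trans' hx (Q.symm' hy)
  · exact absurd (S.trans' (S.symm' (hQS hx)) (S.trans' hxy (hQS hy))) huv
  · exact absurd (S.trans' (S.symm' (hQS hy)) (S.trans' (S.symm' hxy) (hQS hx))) huv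
  · exact Q.trans' hx (Q.symm' hy)

end Modp

section Closure

variable {n : ℕ}

lemma embClosure_snd (x : XN n) : (EmbClosure n x).2 = x.2 ⊔ modp n x.1 := rfl

lemma embClosure_fst_of_mem {x : XN n} {a : Fin n} (ha : a ∈ x.1) :
    (EmbClosure n x).1 = {z | (x.2 ⊔ modp n x.1) z a} := by
  set R := x.2 ⊔ modp n x.1
  ext z
  refine ⟨fun ⟨b, hb, hzb⟩ => R.trans' hzb ?_, fun hza => ⟨a, ha, hza⟩⟩
  exact (le_sup_right : modp n x.1 ≤ R) (Or.inr ⟨hb, ha⟩)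

lemma embClosure_fst_of_empty {x : XN n} (hx : x.1 = ∅) : (EmbClosure n x).1 = ∅ := by
  simp [EmbClosure, hx]

lemma isEmbedded_iff {x : XN n} : IsEmbedded n x ↔ ∀ a ∈ x.1, x.1 = {z | x.2 z a} := by
  constructor
  · intro h a ha
    have hsup : x.2 ⊔ modp n x.1 = x.2 := congrArg Prod.snd h
    rw [← hsup, ← embClosure_fst_of_mem ha, h]
  · intro h
    have hsup : x.2 ⊔ modp n x.1 = x.2 :=
      sup_eq_left.2 (modp_le_iff.2 fun a ha b hb => (h b hb).subset ha)
    refine Prod.ext ?_ hsup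
    ext z
    refine ⟨fun ⟨a, ha, hza⟩ => ?_, fun hz => ⟨z, hz, Setoid.refl' _ z⟩⟩
    rw [h a ha]
    rwa [hsup] at hza

lemma IsEmbedded.modp_le {x : XN n} (h : IsEmbedded n x) : modp n x.1 ≤ x.2 :=
  sup_eq_left.1 (congrArg Prod.snd h)

lemma IsEmbedded.ext_of_mem {x y : XN n} (hx : IsEmbedded n x) (hy : IsEmbedded n y)
    (h : x.2 = y.2) {a : Fin n} (hax : a ∈ x.1) (hay : a ∈ y.1) : x = y := by
  refine Prod.ext ?_ h
  rw [isEmbedded_iff.1 hx a hax, isEmbedded_iff.1 hy a hay, h]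

lemma isEmbedded_embClosure (x : XN n) : IsEmbedded n (EmbClosure n x) := by
  refine isEmbedded_iff.2 fun c ⟨a, ha, hca⟩ => ?_
  rw [embClosure_fst_of_mem ha]
  set R := x.2 ⊔ modp n x.1
  ext z
  exact ⟨fun hza => R.trans' hza (R.symm' hca), fun hzc => R.trans' hzc hca⟩

lemma le_embClosure (x : XN n) : x ≤ EmbClosure n x :=
  ⟨fun a ha => ⟨a, ha, Setoid.refl' _ a⟩, le_sup_left⟩

lemma embClosure_mono {x y : XN n} (h : x ≤ y) : EmbClosure n x ≤ EmbClosure n y := by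
  have h2 : x.2 ⊔ modp n x.1 ≤ y.2 ⊔ modp n y.1 := sup_le_sup h.2 (modp_mono h.1)
  exact ⟨fun z ⟨a, ha, hza⟩ => ⟨a, h.1 ha, h2 hza⟩, h2⟩

def embClosureOperator (n : ℕ) : ClosureOperator (XN n) where
  toFun := EmbClosure n
  monotone' _ _ := embClosure_mono
  le_closure' := le_embClosure
  idempotent' := isEmbedded_embClosure
  IsClosed := IsEmbedded n
  isClosed_iff := Iff.rfl

lemma IsEmbedded.inf {x y : XN n} (hx : IsEmbedded n x) (hy : IsEmbedded n y) :
    IsEmbedded n (x ⊓ y) := by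
  rw [← sInf_pair]
  exact ClosureOperator.sInf_isClosed (c := embClosureOperator n)
    (by rintro z (rfl | rfl) <;> assumption)

end Closure

section Atoms

variable {n : ℕ}

lemma sSup_isAtomPair_le_eq (x : XN n) : sSup {a : XN n | IsAtomPair n a ∧ a ≤ x} = x := by
  set S := {a : XN n | IsAtomPair n a ∧ a ≤ x}
  refine le_antisymm (sSup_le fun _ ha => ha.2) ⟨fun i hi => ?_, fun u v huv => ?_⟩
  · have hle : (({i}, ⊥) : XN n) ≤ sSup S :=
      le_sSup ⟨.inl ⟨i, rfl⟩, Set.singleton_subset_iff.2 hi, bot_le⟩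
    exact hle.1 rfl
  · rcases eq_or_ne u v with rfl | hne
    · exact Setoid.refl' _ u
    · have hle : ((∅, modp n {u, v}) : XN n) ≤ sSup S :=
        le_sSup ⟨.inr ⟨u, v, hne, rfl⟩, Set.empty_subset _, modp_pair_le_iff.2 huv⟩
      exact hle.2 (modp_pair_le_iff.1 le_rfl)

lemma exists_isAtomPair_le_not_le {x m : XN n} (h : ¬ x ≤ m) :
    ∃ e, IsAtomPair n e ∧ e ≤ x ∧ ¬ e ≤ m := by
  by_contra! hall
  exact h ((sSup_isAtomPair_le_eq x).symm.le.trans (sSup_le fun e he => hall e he.1 he.2))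

lemma exists_embClosure_sup_atom_snd_eq {y e : XN n} (hy : IsEmbedded n y)
    (he : IsAtomPair n e) : ∃ u v, (EmbClosure n (y ⊔ e)).2 = y.2 ⊔ modp n {u, v} := by
  rcases he with ⟨i, rfl⟩ | ⟨i, j, -, rfl⟩
  · rcases y.1.eq_empty_or_nonempty with hy0 | ⟨b, hb⟩
    · refine ⟨i, i, ?_⟩
      simp [embClosure_snd, hy0]
    · refine ⟨i, b, ?_⟩
      rw [embClosure_snd, ← sup_modp_insert hy.modp_le hb]
      simp [Set.union_singleton]
  · refine ⟨i, j, ?_⟩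
    simp only [embClosure_snd, Prod.fst_sup, Prod.snd_sup, Set.sup_eq_union, Set.union_empty]
    rw [sup_right_comm, sup_eq_left.2 hy.modp_le]

lemma embClosure_sup_atom_of_fst_eq_empty {y e : XN n} (hy0 : y.1 = ∅) (he : IsAtomPair n e) :
    (EmbClosure n (y ⊔ e)).1 = ∅ ∨ (EmbClosure n (y ⊔ e)).2 = y.2 := by
  rcases he with ⟨i, rfl⟩ | ⟨i, j, -, rfl⟩
  · right
    simp [embClosure_snd, hy0, modp_eq_bot_of_subsingleton Set.subsingleton_singleton]
  · left
    exact embClosure_fst_of_empty (by simp [hy0])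

lemma eq_or_eq_of_le_embClosure_sup_atom {y w e : XN n} (hy : IsEmbedded n y)
    (hw : IsEmbedded n w) (he : IsAtomPair n e) (hyw : y ≤ w)
    (hwc : w ≤ EmbClosure n (y ⊔ e)) : w = y ∨ w = EmbClosure n (y ⊔ e) := by
  set c := EmbClosure n (y ⊔ e)
  have hc : IsEmbedded n c := isEmbedded_embClosure _
  have hyc : y ≤ c := le_sup_left.trans (le_embClosure _)
  obtain ⟨u, v, hcuv⟩ := exists_embClosure_sup_atom_snd_eq hy he
  have hpart : w.2 = y.2 ∨ w.2 = c.2 := by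
    rw [hcuv]
    exact eq_or_eq_sup_modp_pair_of_le hyw.2 (hcuv ▸ hwc.2)
  rcases y.1.eq_empty_or_nonempty with hy0 | ⟨b, hb⟩
  · rcases embClosure_sup_atom_of_fst_eq_empty hy0 he with hc0 | hc2
    · have hw0 : w.1 = ∅ := Set.subset_empty_iff.1 (hc0 ▸ hwc.1)
      rcases hpart with h | h
      · exact .inl (Prod.ext (hw0.trans hy0.symm) h)
      · exact .inr (Prod.ext (hw0.trans hc0.symm) h)
    · have h2 : w.2 = y.2 := le_antisymm (hc2 ▸ hwc.2) hyw.2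
      rcases w.1.eq_empty_or_nonempty with hw0 | ⟨a, ha⟩
      · exact .inl (Prod.ext (hw0.trans hy0.symm) h2)
      · exact .inr (hw.ext_of_mem hc (h2.trans hc2.symm) ha (hwc.1 ha))
  · rcases hpart with h | h
    · exact .inl (hw.ext_of_mem hy h (hyw.1 hb) hb)
    · exact .inr (hw.ext_of_mem hc h (hyw.1 hb) (hyc.1 hb))

end Atoms

section Covering

variable {n : ℕ}

lemma covBy_embClosure_sup_atom {y : Emb n} {e : XN n} (he : IsAtomPair n e)
    (hey : ¬ e ≤ y.val) : y ⋖ ⟨EmbClosure n (y.val ⊔ e), isEmbedded_embClosure _⟩ := by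
  refine covBy_iff_lt_and_eq_or_eq.2 ⟨?_, fun w hyw hwc => ?_⟩
  · exact lt_of_le_not_ge (le_sup_left.trans (le_embClosure _))
      fun h => hey ((le_sup_right.trans (le_embClosure _)).trans h)
  · rcases eq_or_eq_of_le_embClosure_sup_atom y.prop w.prop he hyw hwc with h | h
    exacts [.inl (Subtype.ext h), .inr (Subtype.ext h)]

lemma exists_isAtomPair_embClosure_sup_eq_of_covBy {m x : Emb n} (h : m ⋖ x) :
    ∃ e, IsAtomPair n e ∧ EmbClosure n (m.val ⊔ e) = x.val := by
  obtain ⟨e, he, hex, hem⟩ :=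
    exists_isAtomPair_le_not_le (Subtype.coe_le_coe.not.2 (not_le_of_gt h.lt))
  let w : Emb n := ⟨EmbClosure n (m.val ⊔ e), isEmbedded_embClosure _⟩
  have hmw : m ≤ w := Subtype.coe_le_coe.1 (le_sup_left.trans (le_embClosure _))
  have hwx : w ≤ x := Subtype.coe_le_coe.1
    ((embClosureOperator n).closure_min (sup_le h.le hex) x.prop)
  refine ⟨e, he, ?_⟩
  rcases h.eq_or_eq hmw hwx with hwm | hwx
  · have hew : e ≤ w.val := le_sup_right.trans (le_embClosure _)
    rw [hwm] at hew
    exact absurd hew hem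
  · exact congrArg Subtype.val hwx

lemma covBy_embClosure_sup_of_inf_covBy {x y m j : Emb n} (hm : m.val = x.val ⊓ y.val)
    (hj : j.val = EmbClosure n (x.val ⊔ y.val)) (h : m ⋖ x) : y ⋖ j := by
  obtain ⟨e, he, hex⟩ := exists_isAtomPair_embClosure_sup_eq_of_covBy h
  have hmy : m.val ≤ y.val := hm ▸ inf_le_right
  have hey : ¬ e ≤ y.val := fun hey => not_le_of_gt h.lt <| by
    rw [← Subtype.coe_le_coe, hm, ← hex]
    exact le_inf le_rfl ((embClosureOperator n).closure_min (sup_le hmy hey) y.prop)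
  have hj' : j.val = EmbClosure n (y.val ⊔ e) :=
    calc j.val = EmbClosure n (EmbClosure n (m.val ⊔ e) ⊔ y.val) := by rw [hj, hex]
      _ = EmbClosure n (m.val ⊔ e ⊔ y.val) :=
        (embClosureOperator n).closure_sup_closure_left _ _
      _ = EmbClosure n (y.val ⊔ e) := by rw [sup_right_comm, sup_eq_right.2 hmy]
  obtain rfl : j = ⟨EmbClosure n (y.val ⊔ e), isEmbedded_embClosure _⟩ := Subtype.ext hj'
  exact covBy_embClosure_sup_atom he hey

end Covering

theorem Emb_geometric_general (n : ℕ) :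
    Finite (Emb n) ∧
    (∀ x y : Emb n, IsEmbedded n (x.val ⊓ y.val) ∧
      ∀ z : Emb n, z.val ≤ x.val ⊓ y.val ↔ z ≤ x ∧ z ≤ y) ∧
    (∀ x y : Emb n, IsEmbedded n (EmbClosure n (x.val ⊔ y.val)) ∧
      ∀ z : Emb n, EmbClosure n (x.val ⊔ y.val) ≤ z.val ↔ x ≤ z ∧ y ≤ z) ∧
    (∀ x : Emb n, EmbClosure n (sSup {a : XN n | IsAtomPair n a ∧ a ≤ x.val}) = x.val) ∧
    (∀ x y m j : Emb n, m.val = x.val ⊓ y.val → j.val = EmbClosure n (x.val ⊔ y.val) →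
      m ⋖ x → y ⋖ j) := by
  refine ⟨Subtype.finite, fun x y => ⟨x.prop.inf y.prop, fun z => le_inf_iff⟩,
    fun x y => ⟨isEmbedded_embClosure _, fun z => ?_⟩, fun x => ?_,
    fun x y m j => covBy_embClosure_sup_of_inf_covBy⟩
  · exact (ClosureOperator.IsClosed.closure_le_iff (c := embClosureOperator n) z.prop).trans
      sup_le_iff
  · rw [sSup_isAtomPair_le_eq]
    exact x.prop

theorem Emb_geometric (n : ℕ) (hn : 1 ≤ n) :
    Finite (Emb n) ∧
    (∀ x y : Emb n, IsEmbedded n (x.val ⊓ y.val) ∧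
      ∀ z : Emb n, z.val ≤ x.val ⊓ y.val ↔ z ≤ x ∧ z ≤ y) ∧
    (∀ x y : Emb n, IsEmbedded n (EmbClosure n (x.val ⊔ y.val)) ∧
      ∀ z : Emb n, EmbClosure n (x.val ⊔ y.val) ≤ z.val ↔ x ≤ z ∧ y ≤ z) ∧
    (∀ x : Emb n, EmbClosure n (sSup {a : XN n | IsAtomPair n a ∧ a ≤ x.val}) = x.val) ∧
    (∀ x y m j : Emb n, m.val = x.val ⊓ y.val → j.val = EmbClosure n (x.val ⊔ y.val) →
      m ⋖ x → y ⋖ j) :=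
  Emb_geometric_general n
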